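/- arXiv:0711.0894 — 2 statements merged into one kernel-verified Lean document; each statement's English description precedes it below -/
import Mathlib

section
/- Let Ω be a finite nonempty set and let μ : 2^Ω → ℝ be a classical measure, i.e. μ(A) ≥ 0 for all A, μ(A ⊔ B) = μ(A) + μ(B) for all disjoint A, B, and μ(Ω) = 1. Let Φ ⊆ Ω be nonempty and suppose the multiplicative co-event Φ* is preclusive (for every Z ⊆ Ω with μ(Z) = 0 one has Φ ⊄ Z) and primitive (for every nonempty proper subset Φ' ⊊ Φ there exists Z ⊆ Ω with μ(Z) = 0 and Φ' ⊆ Z). Then Φ is a singleton {γ}, so Φ* = γ* is a homomorphism; moreover γ belongs to no set of μ-measure zero. -/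
/-- Let `Ω` be a finite nonempty set and `μ` a classical measure on `2^Ω`.
If `Φ ⊆ Ω` is nonempty and the multiplicative co-event `Φ*` is preclusive
(`Φ` is not contained in any measure-zero set) and primitive (every nonempty
proper subset of `Φ` is contained in some measure-zero set), then `Φ` is a
singleton `{γ}` — so `Φ* = γ*` is a homomorphism — and `γ` belongs to no set
of `μ`-measure zero. -/
theorem stmt3 (Ω : Type*) [Fintype Ω] [Nonempty Ω] (μ : Set Ω → ℝ)
    (hpos : ∀ A : Set Ω, 0 ≤ μ A)
    (hadd : ∀ A B : Set Ω, Disjoint A B → μ (A ∪ B) = μ A + μ B)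
    (hnorm : μ Set.univ = 1)
    (Φ : Set Ω) (hΦ : Φ.Nonempty)
    (hprec : ∀ Z : Set Ω, μ Z = 0 → ¬ Φ ⊆ Z)
    (hprim : ∀ Φ' : Set Ω, Φ'.Nonempty → Φ' ⊂ Φ → ∃ Z : Set Ω, μ Z = 0 ∧ Φ' ⊆ Z) :
    ∃ γ : Ω, Φ = {γ} ∧ ∀ Z : Set Ω, μ Z = 0 → γ ∉ Z := by
  obtain ⟨a, ha⟩ := hΦ
  have hsing : Φ = {a} := by
    by_contra hne
    -- there is b ∈ Φ with b ≠ a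
    obtain ⟨b, hb, hba⟩ : ∃ b ∈ Φ, b ≠ a := by
      by_contra h
      push_neg at h
      apply hne
      ext x
      constructor
      · intro hx; exact h x hx
      · intro hx; simp only [Set.mem_singleton_iff] at hx; subst hx; exact ha
    obtain ⟨Z₁, hZ₁, hsub₁⟩ := hprim (Φ \ {a}) ⟨b, hb, hba⟩
      ⟨Set.diff_subset, fun h => (h ha).2 rfl⟩
    obtain ⟨Z₂, hZ₂, hsub₂⟩ := hprim (Φ \ {b}) ⟨a, ha, fun h => hba h.symm⟩
      ⟨Set.diff_subset, fun h => (h hb).2 rfl⟩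
    have hcover : Φ ⊆ Z₁ ∪ Z₂ := by
      intro x hx
      by_cases hxa : x = a
      · exact Or.inr (hsub₂ ⟨hx, by simp [hxa, Ne.symm hba]⟩)
      · exact Or.inl (hsub₁ ⟨hx, hxa⟩)
    have hdisj : Disjoint Z₁ (Z₂ \ Z₁) := Set.disjoint_sdiff_right
    have h1 : μ (Z₁ ∪ Z₂) = μ Z₁ + μ (Z₂ \ Z₁) := by
      rw [← hadd Z₁ (Z₂ \ Z₁) hdisj, Set.union_diff_self]
    have h2 : μ (Z₂ \ Z₁) ≤ μ Z₂ := by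
      have := hadd (Z₂ \ Z₁) (Z₂ ∩ Z₁)
        (Set.disjoint_sdiff_left.mono_right Set.inter_subset_right)
      rw [Set.diff_union_inter] at this
      have := hpos (Z₂ ∩ Z₁)
      linarith
    have hzero : μ (Z₁ ∪ Z₂) = 0 := by
      have := hpos (Z₁ ∪ Z₂)
      linarith [hpos (Z₂ \ Z₁)]
    exact hprec _ hzero hcover
  refine ⟨a, hsing, fun Z hZ haZ => hprec Z hZ ?_⟩
  rw [hsing]
  simpa using haZ
end

section
/- Let Ω be a finite nonempty set, μ : 2^Ω → ℝ any map, and A ⊆ Ω a nonempty set that is not contained in any set of μ-measure zero (for every Z ⊆ Ω with μ(Z) = 0, A ⊄ Z). Then there exists a nonempty Φ ⊆ A such that the multiplicative co-event Φ* is preclusive (for every Z with μ(Z) = 0, Φ ⊄ Z) and primitive (for every nonempty proper subset Φ' ⊊ Φ there exists Z with μ(Z) = 0 and Φ' ⊆ Z). In particular, a primitive preclusive multiplicative co-event valuing the event A as true exists. -/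
/-- Let `Ω` be a finite nonempty set, `μ : 2^Ω → ℝ` any map, and `A ⊆ Ω` a nonempty
set not contained in any set of `μ`-measure zero. Then there is a nonempty `Φ ⊆ A`
such that the multiplicative co-event `Φ*` is preclusive (`Φ` is contained in no
measure-zero set) and primitive (every nonempty proper subset of `Φ` is contained
in some measure-zero set); in particular a primitive preclusive multiplicative
co-event valuing the event `A` as true exists. -/
theorem stmt14 (Ω : Type*) [Fintype Ω] [Nonempty Ω] (μ : Set Ω → ℝ)
    (A : Set Ω) (hA : A.Nonempty)
    (hAprec : ∀ Z : Set Ω, μ Z = 0 → ¬ A ⊆ Z) :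
    ∃ Φ : Set Ω, Φ.Nonempty ∧ Φ ⊆ A ∧
      (∀ Z : Set Ω, μ Z = 0 → ¬ Φ ⊆ Z) ∧
      (∀ Φ' : Set Ω, Φ'.Nonempty → Φ' ⊂ Φ → ∃ Z : Set Ω, μ Z = 0 ∧ Φ' ⊆ Z) := by
  classical
  -- consider finsets s with ↑s nonempty, ⊆ A, and preclusive
  set T : Set (Finset Ω) :=
    {s | s.Nonempty ∧ ↑s ⊆ A ∧ ∀ Z : Set Ω, μ Z = 0 → ¬ (↑s : Set Ω) ⊆ Z} with hT
  have hTne : T.Nonempty := by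
    refine ⟨A.toFinset, ?_, ?_, ?_⟩
    · simpa using hA
    · simp
    · simpa using hAprec
  obtain ⟨s, hsT, hsmin⟩ := Set.exists_min_image T (fun s => s.card) (Set.toFinite T) hTne
  obtain ⟨hsne, hsA, hsprec⟩ := hsT
  refine ⟨↑s, by simpa using hsne, hsA, hsprec, ?_⟩
  intro Φ' hΦ'ne hΦ'lt
  by_contra h
  push_neg at h
  have hsub : Φ' ⊆ ↑s := hΦ'lt.subset
  have hfin : Φ'.Finite := (s.finite_toSet).subset hsub
  have hmem : hfin.toFinset ∈ T := by
    refine ⟨hfin.toFinset_nonempty.mpr hΦ'ne, ?_, ?_⟩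
    · rw [hfin.coe_toFinset]; exact hsub.trans hsA
    · intro Z hZ hsubZ
      exact h Z hZ (by rwa [hfin.coe_toFinset] at hsubZ)
  have hcard := hsmin hfin.toFinset hmem
  have hlt : hfin.toFinset.card < s.card := by
    apply Finset.card_lt_card
    rw [Finset.ssubset_iff_of_subset (by rw [← Finset.coe_subset, hfin.coe_toFinset]; exact hsub)]
    obtain ⟨x, hxs, hxΦ'⟩ := Set.exists_of_ssubset hΦ'lt
    exact ⟨x, by simpa using hxs, by simp [hfin.mem_toFinset]; exact hxΦ'⟩
  omega
end
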